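/- arXiv:2005.04420 — 2 statements merged into one kernel-verified Lean document; each statement's English description precedes it below -/
import Mathlib

section
/- Let $-\pi < \theta_m < \theta_M < \pi$, let $W$ be the open sector $\{\mathbf{x} : \theta_m < \arg(x_1+ix_2) < \theta_M\}$, and let $u_0(s\mathbf{x}) = \exp(\sqrt{sr}(\cos(\theta/2+\pi) + i\sin(\theta/2+\pi)))$. Then for every $s > 0$, $\int_W u_0(s\mathbf{x})\, d\mathbf{x} = 6i(e^{-2i\theta_M} - e^{-2i\theta_m})\, s^{-2}$. -/
/-!
In polar coordinates `z = r e^{iθ}` one has `u₀(s z) = exp (-b √r)` with `b = √s e^{iθ/2}`, and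
`Re b = √s cos (θ/2) > 0` on the sector. Substituting `r = t²` turns the radial integral
`∫₀^∞ r e^{-b√r} dr` into `2 ∫₀^∞ t³ e^{-bt} dt = 12 / b⁴ = 12 e^{-2iθ} / s²`, and integrating
`e^{-2iθ}` over `(θ_m, θ_M)` gives the formula. Fubini applies because `Re b` is bounded below by
`√s min (cos (θ_m/2)) (cos (θ_M/2))` on the whole sector.
-/

open Real Complex Set MeasureTheory

/-- The CGO solution `u₀(x) = exp(√r (cos(θ/2+π) + i sin(θ/2+π)))` with the plane
identified with `ℂ`, `r = |z|`, `θ = arg z`. -/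
noncomputable def u0 (z : ℂ) : ℂ :=
  Complex.exp ((Real.sqrt ‖z‖ : ℂ) *
    ((Real.cos (z.arg / 2 + Real.pi) : ℂ) + Complex.I * (Real.sin (z.arg / 2 + Real.pi) : ℂ)))

/-- The open sector `W = {z ≠ 0 : θ_m < arg z < θ_M}`. -/
def sectorW (θm θM : ℝ) : Set ℂ := {z : ℂ | z ≠ 0 ∧ θm < z.arg ∧ z.arg < θM}

open Filter Topology
open scoped Nat

section Laplace

variable {b : ℂ}

lemma norm_pow_mul_cexp_neg_mul {t : ℝ} (ht : 0 ≤ t) (n : ℕ) :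
    ‖(t : ℂ) ^ n * cexp (-(b * t))‖ = t ^ n * rexp (-b.re * t) := by
  simp [norm_exp, abs_of_nonneg ht]

lemma integrableOn_pow_mul_cexp_neg_mul_Ioi (hb : 0 < b.re) (n : ℕ) :
    IntegrableOn (fun t : ℝ ↦ (t : ℂ) ^ n * cexp (-(b * t))) (Ioi 0) := by
  have hreal := integrableOn_rpow_mul_exp_neg_mul_rpow (s := n) (p := 1)
    (neg_one_lt_zero.trans_le n.cast_nonneg) one_pos hb
  refine hreal.mono' (by fun_prop) ?_
  filter_upwards [ae_restrict_mem measurableSet_Ioi] with t ht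
  rw [norm_pow_mul_cexp_neg_mul (le_of_lt ht), rpow_one, rpow_natCast]

lemma tendsto_pow_mul_cexp_neg_mul_atTop (hb : 0 < b.re) (n : ℕ) :
    Tendsto (fun t : ℝ ↦ (t : ℂ) ^ n * cexp (-(b * t))) atTop (𝓝 0) := by
  rw [tendsto_zero_iff_norm_tendsto_zero]
  refine (tendsto_rpow_mul_exp_neg_mul_atTop_nhds_zero n b.re hb).congr' ?_
  filter_upwards [eventually_ge_atTop 0] with t ht
  rw [norm_pow_mul_cexp_neg_mul ht, rpow_natCast]

lemma integral_pow_mul_cexp_neg_mul_Ioi (hb : 0 < b.re) (n : ℕ) :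
    ∫ t in Ioi (0 : ℝ), (t : ℂ) ^ n * cexp (-(b * t)) = n ! / b ^ (n + 1) := by
  have hb0 : b ≠ 0 := fun h ↦ by simp [h] at hb
  induction n with
  | zero =>
    simpa [neg_div, div_neg] using integral_exp_mul_complex_Ioi (a := -b) (by simpa using hb) 0
  | succ n ih =>
    -- integration by parts against `v = -e^{-bt}/b` gives `I (n + 1) = (n + 1) / b * I n`
    have hu : ∀ t ∈ Ioi (0 : ℝ), HasDerivAt (fun t : ℝ ↦ (t : ℂ) ^ (n + 1))
        ((n + 1 : ℂ) * (t : ℂ) ^ n) t := fun t _ ↦ by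
      simpa using ((hasDerivAt_id (t : ℂ)).pow (n + 1)).comp_ofReal
    have hv : ∀ t ∈ Ioi (0 : ℝ), HasDerivAt (fun t : ℝ ↦ -cexp (-(b * t)) / b)
        (cexp (-(b * t))) t := fun t _ ↦ by
      have := (((hasDerivAt_id t).ofReal_comp.const_mul b).neg.cexp.neg.div_const b)
      simp only [Pi.neg_apply, id, ofReal_one, mul_one] at this
      exact this.congr_deriv (by field_simp)
    have hlim0 : Tendsto (fun t : ℝ ↦ (t : ℂ) ^ (n + 1) * (-cexp (-(b * t)) / b))
        (𝓝[>] 0) (𝓝 0) := by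
      have : Continuous (fun t : ℝ ↦ (t : ℂ) ^ (n + 1) * (-cexp (-(b * t)) / b)) := by fun_prop
      simpa using (this.tendsto 0).mono_left nhdsWithin_le_nhds
    have hlimTop : Tendsto (fun t : ℝ ↦ (t : ℂ) ^ (n + 1) * (-cexp (-(b * t)) / b))
        atTop (𝓝 0) := by
      simpa [mul_div_assoc'] using ((tendsto_pow_mul_cexp_neg_mul_atTop hb (n + 1)).neg.div_const b)
    have hibp := integral_Ioi_mul_deriv_eq_deriv_mul hu hv
      (integrableOn_pow_mul_cexp_neg_mul_Ioi hb (n + 1))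
      (IntegrableOn.congr_fun
        ((integrableOn_pow_mul_cexp_neg_mul_Ioi hb n).const_mul ((n + 1 : ℂ) * (-1 / b)))
        (fun t _ ↦ by simp only [Pi.mul_apply]; ring) measurableSet_Ioi) hlim0 hlimTop
    have hintegrand : ∀ t : ℝ, (n + 1 : ℂ) * (t : ℂ) ^ n * (-cexp (-(b * t)) / b)
        = -((n + 1) / b) * ((t : ℂ) ^ n * cexp (-(b * t))) := fun t ↦ by ring
    simp_rw [hibp, hintegrand, integral_const_mul, ih, Nat.factorial_succ]
    push_cast
    field_simp
    ring

lemma eqOn_rpow_two_smul_pow_mul_cexp_neg_mul_sqrt (n : ℕ) :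
    EqOn (fun x : ℝ ↦ (|(2 : ℝ)| * x ^ ((2 : ℝ) - 1)) •
        (((x ^ (2 : ℝ) : ℝ) : ℂ) ^ n * cexp (-(b * √(x ^ (2 : ℝ))))))
      (fun x : ℝ ↦ 2 * ((x : ℂ) ^ (2 * n + 1) * cexp (-(b * x)))) (Ioi 0) := by
  intro x hx
  have hx2 : x ^ (2 : ℝ) = x ^ 2 := rpow_two x
  simp only [hx2, sqrt_sq (le_of_lt hx), abs_two, real_smul]
  norm_num
  ring

lemma integrableOn_pow_mul_cexp_neg_mul_sqrt_Ioi (hb : 0 < b.re) (n : ℕ) :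
    IntegrableOn (fun r : ℝ ↦ (r : ℂ) ^ n * cexp (-(b * √r))) (Ioi 0) :=
  (integrableOn_Ioi_comp_rpow_iff _ two_ne_zero).mp <|
    IntegrableOn.congr_fun ((integrableOn_pow_mul_cexp_neg_mul_Ioi hb (2 * n + 1)).const_mul 2)
      (eqOn_rpow_two_smul_pow_mul_cexp_neg_mul_sqrt n).symm measurableSet_Ioi

lemma integral_pow_mul_cexp_neg_mul_sqrt_Ioi (hb : 0 < b.re) (n : ℕ) :
    ∫ r in Ioi (0 : ℝ), (r : ℂ) ^ n * cexp (-(b * √r)) = 2 * (2 * n + 1)! / b ^ (2 * n + 2) := by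
  rw [← integral_comp_rpow_Ioi _ two_ne_zero,
    setIntegral_congr_fun measurableSet_Ioi (eqOn_rpow_two_smul_pow_mul_cexp_neg_mul_sqrt n),
    integral_const_mul, integral_pow_mul_cexp_neg_mul_Ioi hb, mul_div_assoc]

end Laplace

lemma integrableOn_mul_cexp_neg_mul_sqrt_prod {b : ℝ → ℂ} (hb : Continuous b) {c : ℝ}
    (hc : 0 < c) {T : Set ℝ} (hT : MeasurableSet T) (hTfin : volume T ≠ ⊤)
    (hbc : ∀ θ ∈ T, c ≤ (b θ).re) :
    IntegrableOn (fun p : ℝ × ℝ ↦ (p.1 : ℂ) * cexp (-(b p.2 * √p.1))) (Ioi 0 ×ˢ T) := by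
  have : IsFiniteMeasure (volume.restrict T) := isFiniteMeasure_restrict.mpr hTfin
  have hdom : IntegrableOn (fun p : ℝ × ℝ ↦ ‖(p.1 : ℂ) * cexp (-(c * √p.1))‖ * 1)
      (Ioi 0 ×ˢ T) := by
    rw [IntegrableOn, Measure.volume_eq_prod, ← Measure.prod_restrict]
    simpa only [pow_one] using
      (integrableOn_pow_mul_cexp_neg_mul_sqrt_Ioi (b := c) (by rwa [ofReal_re]) 1).norm.mul_prod
        (integrable_const (1 : ℝ) (μ := volume.restrict T))
  refine hdom.mono' (by fun_prop) ?_
  filter_upwards [ae_restrict_mem (measurableSet_Ioi.prod hT)] with p ⟨hr, hθ⟩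
  have hr : 0 ≤ p.1 := le_of_lt hr
  simp only [norm_mul, norm_exp, norm_real, norm_of_nonneg hr, mul_one, neg_re, mul_re,
    ofReal_re, ofReal_im, mul_zero, sub_zero]
  gcongr
  exact hbc p.2 hθ

lemma u0_eq_cexp (z : ℂ) : u0 z = cexp (-(√‖z‖ * cexp ((z.arg / 2 : ℝ) * I))) := by
  rw [u0, Real.cos_add_pi, Real.sin_add_pi, exp_mul_I, ← ofReal_cos, ← ofReal_sin]
  push_cast
  ring_nf

lemma arg_polarCoord_symm {p : ℝ × ℝ} (hp : p ∈ polarCoord.target) :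
    (Complex.polarCoord.symm p).arg = p.2 := by
  have h := congrArg Prod.snd (Complex.polarCoord.right_inv hp)
  rwa [Complex.polarCoord_apply] at h

lemma u0_ofReal_mul_polarCoord_symm {s : ℝ} (hs : 0 < s) {p : ℝ × ℝ}
    (hp : p ∈ polarCoord.target) :
    u0 (s * Complex.polarCoord.symm p) = cexp (-(√s * cexp ((p.2 / 2 : ℝ) * I) * √p.1)) := by
  rw [u0_eq_cexp, Complex.arg_real_mul _ hs, arg_polarCoord_symm hp, norm_mul, norm_real,
    norm_polarCoord_symm, norm_of_nonneg hs.le, abs_of_pos hp.1, sqrt_mul hs.le]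
  push_cast
  ring_nf

lemma measurableSet_sectorW (θm θM : ℝ) : MeasurableSet (sectorW θm θM) :=
  (measurableSet_singleton 0).compl.inter
    ((measurable_arg measurableSet_Ioi).inter (measurable_arg measurableSet_Iio))

lemma polarCoord_symm_mem_sectorW_iff {θm θM : ℝ} {p : ℝ × ℝ} (hp : p ∈ polarCoord.target) :
    Complex.polarCoord.symm p ∈ sectorW θm θM ↔ p.2 ∈ Ioo θm θM := by
  have hne : Complex.polarCoord.symm p ≠ 0 := by
    rw [← norm_ne_zero_iff, norm_polarCoord_symm, abs_of_pos hp.1]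
    exact hp.1.ne'
  simp only [sectorW, mem_ofPred_eq, arg_polarCoord_symm hp, mem_Ioo]
  exact and_iff_right hne

lemma setIntegral_sectorW_eq_polarCoord {E : Type*} [NormedAddCommGroup E] [NormedSpace ℝ E]
    (f : ℂ → E) {θm θM : ℝ} (h1 : -π ≤ θm) (h3 : θM ≤ π) :
    ∫ z in sectorW θm θM, f z =
      ∫ p in Ioi 0 ×ˢ Ioo θm θM, p.1 • f (Complex.polarCoord.symm p) := by
  have hS : MeasurableSet (Ioi (0 : ℝ) ×ˢ Ioo θm θM) := measurableSet_Ioi.prod measurableSet_Ioo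
  have hind : EqOn (fun p : ℝ × ℝ ↦ p.1 • (sectorW θm θM).indicator f (Complex.polarCoord.symm p))
      ((Ioi 0 ×ˢ Ioo θm θM).indicator fun p ↦ p.1 • f (Complex.polarCoord.symm p))
      polarCoord.target := by
    intro p hp
    dsimp only
    by_cases hθ : p.2 ∈ Ioo θm θM
    · rw [indicator_of_mem ((polarCoord_symm_mem_sectorW_iff hp).mpr hθ),
        indicator_of_mem (show p ∈ Ioi 0 ×ˢ Ioo θm θM from ⟨hp.1, hθ⟩)]
    · rw [indicator_of_notMem (mt (polarCoord_symm_mem_sectorW_iff hp).mp hθ),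
        indicator_of_notMem (fun h ↦ hθ h.2), smul_zero]
  have htarget : polarCoord.target ∩ Ioi 0 ×ˢ Ioo θm θM = Ioi 0 ×ˢ Ioo θm θM :=
    inter_eq_right.mpr (prod_mono le_rfl (Ioo_subset_Ioo h1 h3))
  rw [← integral_indicator (measurableSet_sectorW θm θM), ← Complex.integral_comp_polarCoord_symm,
    setIntegral_congr_fun polarCoord.open_target.measurableSet hind, setIntegral_indicator hS,
    htarget]

lemma min_cos_half_le_cos_half {θm θM θ : ℝ} (h1 : -π ≤ θm) (h3 : θM ≤ π)
    (hθ : θ ∈ Icc θm θM) : min (Real.cos (θm / 2)) (Real.cos (θM / 2)) ≤ Real.cos (θ / 2) := by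
  rcases le_total θ 0 with hneg | hpos
  · refine (min_le_left _ _).trans ?_
    rw [← Real.cos_neg (θm / 2), ← Real.cos_neg (θ / 2)]
    exact cos_le_cos_of_nonneg_of_le_pi (by linarith) (by linarith [pi_pos]) (by linarith [hθ.1])
  · exact (min_le_right _ _).trans
      (cos_le_cos_of_nonneg_of_le_pi (by linarith) (by linarith [pi_pos]) (by linarith [hθ.2]))

lemma cos_half_pos {θ : ℝ} (hθ : θ ∈ Ioo (-π) π) : 0 < Real.cos (θ / 2) :=
  cos_pos_of_mem_Ioo ⟨by linarith [hθ.1], by linarith [hθ.2]⟩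

lemma re_sqrt_mul_cexp_half_mul_I (s θ : ℝ) :
    (√s * cexp ((θ / 2 : ℝ) * I)).re = √s * Real.cos (θ / 2) := by
  rw [re_ofReal_mul, exp_ofReal_mul_I_re]

lemma integrableOn_smul_u0_polarCoord_symm {s θm θM : ℝ} (hs : 0 < s) (h1 : -π < θm)
    (h3 : θM < π) :
    IntegrableOn (fun p : ℝ × ℝ ↦ p.1 • u0 (s * Complex.polarCoord.symm p))
      (Ioi 0 ×ˢ Ioo θm θM) := by
  rcases le_or_gt θM θm with h2 | h2
  · simp [Ioo_eq_empty (not_lt.mpr h2)]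
  have hmin : 0 < min (Real.cos (θm / 2)) (Real.cos (θM / 2)) :=
    lt_min (cos_half_pos ⟨h1, h2.trans h3⟩) (cos_half_pos ⟨h1.trans h2, h3⟩)
  refine (integrableOn_mul_cexp_neg_mul_sqrt_prod (b := fun θ ↦ √s * cexp ((θ / 2 : ℝ) * I))
    (by fun_prop) (mul_pos (sqrt_pos.mpr hs) hmin) measurableSet_Ioo measure_Ioo_lt_top.ne
    fun θ hθ ↦ ?_).congr_fun (fun p hp ↦ ?_) (measurableSet_Ioi.prod measurableSet_Ioo)
  · rw [re_sqrt_mul_cexp_half_mul_I]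
    exact mul_le_mul_of_nonneg_left (min_cos_half_le_cos_half h1.le h3.le (Ioo_subset_Icc_self hθ))
      (sqrt_nonneg s)
  · rw [u0_ofReal_mul_polarCoord_symm hs ⟨hp.1, h1.trans hp.2.1, hp.2.2.trans h3⟩, real_smul]

lemma integral_smul_u0_polarCoord_symm {s θ : ℝ} (hs : 0 < s) (hθ : θ ∈ Ioo (-π) π) :
    ∫ r in Ioi (0 : ℝ), r • u0 (s * Complex.polarCoord.symm (r, θ)) =
      12 / (s : ℂ) ^ 2 * cexp (-2 * I * θ) := by
  have hb : 0 < (√s * cexp ((θ / 2 : ℝ) * I)).re := by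
    rw [re_sqrt_mul_cexp_half_mul_I]
    exact mul_pos (sqrt_pos.mpr hs) (cos_half_pos hθ)
  have hb4 : (√s * cexp ((θ / 2 : ℝ) * I)) ^ 4 = s ^ 2 * cexp (2 * I * θ) := by
    rw [mul_pow, ← Complex.exp_nat_mul, ← ofReal_pow, show √s ^ 4 = (√s ^ 2) ^ 2 by ring,
      sq_sqrt hs.le]
    push_cast
    ring_nf
  have hradial : ∫ r in Ioi (0 : ℝ), (r : ℂ) * cexp (-(√s * cexp ((θ / 2 : ℝ) * I) * √r)) =
      12 / (√s * cexp ((θ / 2 : ℝ) * I)) ^ 4 := by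
    convert integral_pow_mul_cexp_neg_mul_sqrt_Ioi hb 1 using 1
    · simp only [pow_one]
    · norm_num [Nat.factorial]
  rw [setIntegral_congr_fun measurableSet_Ioi fun r hr ↦ by
      rw [u0_ofReal_mul_polarCoord_symm hs ⟨hr, hθ⟩, real_smul], hradial, hb4]
  rw [neg_mul, neg_mul, Complex.exp_neg]
  field_simp

/-- `∫_W u₀(sx) dx = 6i (e^{-2iθ_M} - e^{-2iθ_m}) s^{-2}` for every `s > 0`. -/
theorem integral_u0_sector (θm θM : ℝ) (h1 : -Real.pi < θm) (h2 : θm < θM) (h3 : θM < Real.pi) :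
    ∀ s : ℝ, 0 < s →
      ∫ z in sectorW θm θM, u0 ((s : ℂ) * z) =
        6 * Complex.I *
          (Complex.exp (-2 * (θM : ℂ) * Complex.I) - Complex.exp (-2 * (θm : ℂ) * Complex.I)) /
          (s : ℂ) ^ 2 := by
  intro s hs
  have hint := integrableOn_smul_u0_polarCoord_symm hs h1 h3
  rw [IntegrableOn, Measure.volume_eq_prod, ← Measure.prod_restrict] at hint
  rw [setIntegral_sectorW_eq_polarCoord _ h1.le h3.le, Measure.volume_eq_prod,
    ← Measure.prod_restrict, integral_prod_symm _ hint,
    setIntegral_congr_fun measurableSet_Ioo fun θ hθ ↦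
      integral_smul_u0_polarCoord_symm hs ⟨h1.trans hθ.1, hθ.2.trans h3⟩,
    integral_const_mul, ← integral_Ioc_eq_integral_Ioo, ← intervalIntegral.integral_of_le h2.le,
    integral_exp_mul_complex (by simp)]
  have hs0 : (s : ℂ) ≠ 0 := ofReal_ne_zero.mpr hs.ne'
  field_simp
  ring_nf
  rw [I_sq]
  ring
end

section
/- Let $W \subset \mathbb{R}^2$ be the open sector with angles $-\pi < \theta_m < \theta_M < \pi$ and let $\delta_W = -\max_{\theta\in[\theta_m,\theta_M]}\cos(\theta/2+\pi) > 0$. Let $g : S_h \to \mathbb{C}$ be measurable with $|g(\mathbf{x})| \le M |\mathbf{x}|^{\alpha}$ on $S_h = W \cap B_h$ for some $M > 0$, $\alpha \in (0,1)$. Then for all $s > 0$, $\left|\int_{S_h} g(\mathbf{x})\, u_0(s\mathbf{x})\, d\mathbf{x}\right| \le \frac{2(\theta_M-\theta_m)\Gamma(2\alpha+4)}{\delta_W^{2\alpha+4}}\, M\, s^{-\alpha-2}$. -/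
open Real Complex Set MeasureTheory Metric

noncomputable def deltaW (θm θM : ℝ) : ℝ :=
  -sSup ((fun θ : ℝ => Real.cos (θ / 2 + Real.pi)) '' Set.Icc θm θM)

lemma deltaW_spec {θm θM : ℝ} (h1 : -Real.pi < θm) (h2 : θm < θM) (h3 : θM < Real.pi) :
    0 < deltaW θm θM ∧ ∀ θ ∈ Icc θm θM, Real.cos (θ / 2 + Real.pi) ≤ -deltaW θm θM := by
  have hK : IsCompact ((fun θ : ℝ => Real.cos (θ / 2 + Real.pi)) '' Icc θm θM) :=
    isCompact_Icc.image (by continuity)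
  have hne : ((fun θ : ℝ => Real.cos (θ / 2 + Real.pi)) '' Icc θm θM).Nonempty :=
    (nonempty_Icc.2 h2.le).image _
  obtain ⟨θ0, hθ0, hval⟩ := hK.sSup_mem hne
  constructor
  · have h0 : Real.cos (θ0 / 2 + Real.pi) < 0 := by
      apply Real.cos_neg_of_pi_div_two_lt_of_lt
      · have := hθ0.1; linarith [h1]
      · have := hθ0.2; linarith [h3]
    rw [deltaW, ← hval]
    linarith
  · intro θ hθ
    have := le_csSup hK.bddAbove (mem_image_of_mem (fun θ : ℝ => Real.cos (θ / 2 + Real.pi)) hθ)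
    rw [deltaW]
    linarith

lemma sector_eq_image {θm θM : ℝ} (h1 : -Real.pi < θm) (h3 : θM < Real.pi) :
    sectorW θm θM = Complex.polarCoord.symm '' (Ioi (0:ℝ) ×ˢ Ioo θm θM) := by
  ext z
  constructor
  · rintro ⟨hz0, hzm, hzM⟩
    refine ⟨(‖z‖, z.arg), ⟨?_, hzm, hzM⟩, ?_⟩
    · exact norm_pos_iff.mpr hz0
    · rw [Complex.polarCoord_symm_apply]
      exact_mod_cast Complex.norm_mul_cos_add_sin_mul_I z
  · rintro ⟨⟨r, θ⟩, ⟨hr, hθ⟩, rfl⟩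
    rw [Complex.polarCoord_symm_apply]
    have hr' : (0:ℝ) < r := hr
    have habs : ‖(r:ℂ) * (Real.cos θ + Real.sin θ * Complex.I)‖ = r := by
      rw [Complex.ofReal_cos, Complex.ofReal_sin, norm_mul, Complex.norm_cos_add_sin_mul_I,
        Complex.norm_real, Real.norm_eq_abs, abs_of_pos hr', mul_one]
    have harg : ((r:ℂ) * (Real.cos θ + Real.sin θ * Complex.I)).arg = θ := by
      rw [Complex.ofReal_cos, Complex.ofReal_sin, Complex.arg_real_mul _ hr',
        Complex.arg_cos_add_sin_mul_I ⟨lt_trans h1 hθ.1, le_of_lt (lt_trans hθ.2 h3)⟩]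
    refine ⟨?_, ?_, ?_⟩
    · intro h0
      rw [h0, norm_zero] at habs
      exact hr'.ne habs
    · rw [harg]; exact hθ.1
    · rw [harg]; exact hθ.2

lemma oneD_integrable {q b : ℝ} (hq : -1 < q) (hb : 0 < b) :
    IntegrableOn (fun r : ℝ => r ^ (q+1) * Real.exp (-b * r ^ (1/2 : ℝ))) (Ioi 0) := by
  rw [← integrableOn_Ioi_comp_rpow_iff' (fun r : ℝ => r ^ (q+1) * Real.exp (-b * r ^ (1/2 : ℝ)))
    (two_ne_zero)]
  have base : IntegrableOn (fun x : ℝ => x ^ (2*q+3) * Real.exp (-b * x)) (Ioi 0) := by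
    have := integrableOn_rpow_mul_exp_neg_mul_rpow (s := 2*q+3) (p := 1)
      (by linarith) zero_lt_one hb
    refine this.congr_fun (fun x hx => ?_) measurableSet_Ioi
    dsimp only
    rw [Real.rpow_one]
  refine base.congr_fun (fun x hx => ?_) measurableSet_Ioi
  have hx' : (0:ℝ) < x := hx
  have e2 : (x ^ (2:ℝ)) ^ (1/2 : ℝ) = x := by
    rw [← Real.rpow_mul hx'.le]; norm_num
  have e1 : (x ^ (2:ℝ)) ^ (q+1 : ℝ) = x ^ (2*q+2 : ℝ) := by
    rw [← Real.rpow_mul hx'.le]; ring_nf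
  have e3 : x ^ (2*q+3 : ℝ) = x * x ^ (2*q+2 : ℝ) := by
    rw [show (2*q+3 : ℝ) = 1 + (2*q+2) by ring, Real.rpow_add hx', Real.rpow_one]
  dsimp only
  rw [smul_eq_mul, e1, e2, show (2:ℝ) - 1 = 1 by norm_num, Real.rpow_one, e3]
  ring

lemma oneD_value {q b : ℝ} (hq : -1 < q) (hb : 0 < b) :
    ∫ r in Ioi (0:ℝ), r ^ (q+1) * Real.exp (-b * r ^ (1/2 : ℝ)) =
      b ^ (-(2*q+4)) * (2 * Real.Gamma (2*q+4)) := by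
  have := _root_.integral_rpow_mul_exp_neg_mul_rpow (p := 1/2) (q := q+1) (b := b)
    (by norm_num) (by linarith) hb
  rw [this, show -(q+1+1)/(1/2 : ℝ) = -(2*q+4) by ring, show (q+1+1)/(1/2 : ℝ) = 2*q+4 by ring]
  ring

lemma sector_key {θm θM q b : ℝ} (h1 : -Real.pi < θm) (h2 : θm < θM) (h3 : θM < Real.pi)
    (hq : -1 < q) (hb : 0 < b) :
    IntegrableOn (fun z : ℂ => ‖z‖ ^ q * Real.exp (-b * ‖z‖ ^ (1/2 : ℝ)))
        (sectorW θm θM) ∧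
    ∫ z in sectorW θm θM, ‖z‖ ^ q * Real.exp (-b * ‖z‖ ^ (1/2 : ℝ)) =
      (θM - θm) * (b ^ (-(2*q+4)) * (2 * Real.Gamma (2*q+4))) := by
  set F : ℂ → ℝ := fun z => ‖z‖ ^ q * Real.exp (-b * ‖z‖ ^ (1/2 : ℝ)) with hF
  set T : Set (ℝ × ℝ) := Ioi (0:ℝ) ×ˢ Ioo θm θM with hTdef
  have hT : MeasurableSet T := measurableSet_Ioi.prod measurableSet_Ioo
  have hTsub : T ⊆ polarCoord.target := by
    rw [polarCoord_target]
    exact prod_mono Subset.rfl (Ioo_subset_Ioo h1.le h3.le)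
  set B : ℝ × ℝ → ℝ × ℝ →L[ℝ] ℝ × ℝ := fun p =>
    LinearMap.toContinuousLinearMap (Matrix.toLin (Module.Basis.finTwoProd ℝ) (Module.Basis.finTwoProd ℝ)
      !![Real.cos p.2, -p.1 * Real.sin p.2; Real.sin p.2, p.1 * Real.cos p.2]) with hB
  have hderiv : ∀ p ∈ T, HasFDerivAt polarCoord.symm (B p) p := fun p _ =>
    hasFDerivAt_polarCoord_symm p
  have hderiv' : ∀ p ∈ T, HasFDerivWithinAt polarCoord.symm (B p) T p := fun p hp =>
    (hasFDerivAt_polarCoord_symm p).hasFDerivWithinAt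
  have B_det : ∀ p, (B p).det = p.1 := by
    intro p
    conv_rhs => rw [← one_mul p.1, ← Real.cos_sq_add_sin_sq p.2]
    simp only [hB, neg_mul, LinearMap.det_toContinuousLinearMap, LinearMap.det_toLin,
      Matrix.det_fin_two_of, sub_neg_eq_add]
    ring
  have hinj : InjOn polarCoord.symm T := by
    have := polarCoord.symm.injOn
    rw [OpenPartialHomeomorph.symm_source] at this
    exact this.mono hTsub
  have hcomp : ∀ p : ℝ × ℝ,
      Complex.measurableEquivRealProd.symm (polarCoord.symm p) = Complex.polarCoord.symm p := by
    intro p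
    rw [Complex.polarCoord_symm_apply, Complex.measurableEquivRealProd_symm_apply]
    apply Complex.ext <;> simp [polarCoord, Complex.cos_ofReal_re, Complex.sin_ofReal_re]
  have himg : sectorW θm θM = ⇑Complex.measurableEquivRealProd.symm '' (polarCoord.symm '' T) := by
    rw [sector_eq_image h1 h3, ← image_comp]
    exact image_congr (fun p _ => (hcomp p).symm)
  -- pointwise identification on T
  have hptT : ∀ p ∈ T, |(B p).det| • (F ∘ ⇑Complex.measurableEquivRealProd.symm)
      (polarCoord.symm p) = (p.1 ^ (q+1) * Real.exp (-b * p.1 ^ (1/2:ℝ))) * (1:ℝ) := by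
    intro p hp
    have hp1 : (0:ℝ) < p.1 := hp.1
    have habs : ‖Complex.polarCoord.symm p‖ = p.1 := by
      rw [Complex.norm_polarCoord_symm, abs_of_pos hp1]
    rw [B_det]
    simp only [Function.comp_apply, hcomp p, smul_eq_mul, mul_one, hF, habs]
    rw [show (q + 1 : ℝ) = 1 + q by ring, Real.rpow_add hp1, Real.rpow_one, abs_of_pos hp1]
    ring
  have MP : MeasurePreserving (⇑Complex.measurableEquivRealProd.symm) :=
    Complex.volume_preserving_equiv_real_prod.symm
  have emb : MeasurableEmbedding (⇑Complex.measurableEquivRealProd.symm) :=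
    Complex.measurableEquivRealProd.symm.measurableEmbedding
  -- integrability
  have hprod : IntegrableOn
      (fun p : ℝ × ℝ => (p.1 ^ (q+1) * Real.exp (-b * p.1 ^ (1/2:ℝ))) * (1:ℝ)) T := by
    have hres : (volume : Measure (ℝ × ℝ)).restrict (Ioi (0:ℝ) ×ˢ Ioo θm θM) =
        (volume.restrict (Ioi (0:ℝ))).prod (volume.restrict (Ioo θm θM)) := by
      rw [Measure.volume_eq_prod, ← Measure.prod_restrict]
    rw [hTdef]
    rw [IntegrableOn]
    rw [hres]
    have hone : IntegrableOn (fun _ : ℝ => (1:ℝ)) (Ioo θm θM) volume :=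
      integrableOn_const (by rw [Real.volume_Ioo]; exact ENNReal.ofReal_ne_top)
    exact Integrable.mul_prod (oneD_integrable hq hb) hone
  have hint : IntegrableOn F (sectorW θm θM) := by
    rw [himg, MP.integrableOn_image emb,
      integrableOn_image_iff_integrableOn_abs_det_fderiv_smul volume hT hderiv' hinj]
    exact hprod.congr_fun (fun p hp => (hptT p hp).symm) hT
  refine ⟨hint, ?_⟩
  -- value
  calc ∫ z in sectorW θm θM, F z
      = ∫ p in polarCoord.symm '' T, (F ∘ ⇑Complex.measurableEquivRealProd.symm) p := by
        rw [himg, MP.setIntegral_image_emb emb]; rfl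
    _ = ∫ p in T, |(B p).det| • (F ∘ ⇑Complex.measurableEquivRealProd.symm)
          (polarCoord.symm p) :=
        integral_image_eq_integral_abs_det_fderiv_smul volume hT hderiv' hinj _
    _ = ∫ p in T, (fun r : ℝ => r ^ (q+1) * Real.exp (-b * r ^ (1/2:ℝ))) p.1 *
          (fun _ : ℝ => (1:ℝ)) p.2 :=
        setIntegral_congr_fun hT (fun p hp => hptT p hp)
    _ = (∫ r in Ioi (0:ℝ), r ^ (q+1) * Real.exp (-b * r ^ (1/2:ℝ))) *
          (∫ _ in Ioo θm θM, (1:ℝ)) := by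
        rw [hTdef, Measure.volume_eq_prod]
        exact setIntegral_prod_mul (fun r : ℝ => r ^ (q+1) * Real.exp (-b * r ^ (1/2:ℝ)))
          (fun _ : ℝ => (1:ℝ)) _ _
    _ = (θM - θm) * (b ^ (-(2*q+4)) * (2 * Real.Gamma (2*q+4))) := by
        rw [oneD_value hq hb]
        simp only [integral_const, MeasurableSet.univ, Measure.restrict_apply, univ_inter,
          Real.volume_Ioo, smul_eq_mul, mul_one]
        rw [measureReal_restrict_apply_univ, Real.volume_real_Ioo_of_le (by linarith)]
        ring

/-- If `|g(x)| ≤ M|x|^α` on `S_h = W ∩ B_h`, then for all `s > 0`,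
`‖∫_{S_h} g(x) u₀(sx) dx‖ ≤ 2(θ_M-θ_m)Γ(2α+4) δ_W^{-(2α+4)} M s^{-α-2}`. -/
theorem weighted_integral_u0_le (θm θM h α M s : ℝ) (g : ℂ → ℂ)
    (h1 : -Real.pi < θm) (h2 : θm < θM) (h3 : θM < Real.pi)
    (hh : 0 < h) (hα1 : 0 < α) (hα2 : α < 1) (hM : 0 < M) (hs : 0 < s)
    (hg : Measurable g)
    (hbound : ∀ z ∈ sectorW θm θM ∩ Metric.ball (0 : ℂ) h, ‖g z‖ ≤ M * ‖z‖ ^ α) :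
    ‖∫ z in sectorW θm θM ∩ Metric.ball (0 : ℂ) h, g z * u0 ((s : ℂ) * z)‖ ≤
      2 * (θM - θm) * Real.Gamma (2 * α + 4) / deltaW θm θM ^ (2 * α + 4) * M *
        s ^ (-α - 2) := by
  obtain ⟨hδ, hcos⟩ := deltaW_spec h1 h2 h3
  have hb : 0 < deltaW θm θM * Real.sqrt s := mul_pos hδ (Real.sqrt_pos.2 hs)
  obtain ⟨hFint, hFval⟩ := sector_key (q := α) (b := deltaW θm θM * Real.sqrt s)
    h1 h2 h3 (by linarith) hb
  set δ := deltaW θm θM with hδdef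
  set b := δ * Real.sqrt s with hbdef
  set F : ℂ → ℝ := fun z => ‖z‖ ^ α * Real.exp (-b * ‖z‖ ^ (1/2:ℝ))
    with hFdef
  set Sh := sectorW θm θM ∩ Metric.ball (0:ℂ) h with hShdef
  have hSector_meas : MeasurableSet (sectorW θm θM) := by
    have heq : sectorW θm θM = ({(0:ℂ)}ᶜ : Set ℂ) ∩ (Complex.arg ⁻¹' Ioo θm θM) := by
      ext z
      simp [sectorW, mem_setOf_eq, and_assoc]
    rw [heq]
    exact (measurableSet_singleton (0:ℂ)).compl.inter
      (Complex.measurable_arg measurableSet_Ioo)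
  have hSh_meas : MeasurableSet Sh := hSector_meas.inter measurableSet_ball
  -- pointwise bound
  have hpt : ∀ z ∈ Sh, ‖g z * u0 ((s:ℂ) * z)‖ ≤ M * F z := by
    intro z hz
    have hzs := hz.1
    have habsz : (0:ℝ) ≤ ‖z‖ := norm_nonneg z
    have habsw : ‖(s:ℂ) * z‖ = s * ‖z‖ := by
      rw [norm_mul, Complex.norm_real, Real.norm_eq_abs, abs_of_pos hs]
    have hargw : ((s:ℂ) * z).arg = z.arg := Complex.arg_real_mul z hs
    have hnorm : ‖u0 ((s:ℂ) * z)‖ =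
        Real.exp (Real.sqrt ‖(s:ℂ)*z‖ *
          Real.cos (((s:ℂ)*z).arg / 2 + Real.pi)) := by
      rw [u0, Complex.norm_exp]
      congr 1
      rw [Complex.re_ofReal_mul]
      congr 1
      simp only [Complex.add_re, Complex.ofReal_re, Complex.mul_re, Complex.I_re, Complex.I_im,
        Complex.ofReal_im]
      ring
    have hsqrt : Real.sqrt ‖(s:ℂ)*z‖ =
        Real.sqrt s * ‖z‖ ^ (1/2:ℝ) := by
      rw [habsw, Real.sqrt_mul hs.le, Real.sqrt_eq_rpow ‖z‖]
    have hcosle : Real.cos (z.arg / 2 + Real.pi) ≤ -δ :=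
      hcos z.arg ⟨hzs.2.1.le, hzs.2.2.le⟩
    have hu0 : ‖u0 ((s:ℂ) * z)‖ ≤ Real.exp (-b * ‖z‖ ^ (1/2:ℝ)) := by
      rw [hnorm, hargw, hsqrt]
      apply Real.exp_le_exp.2
      have hnn : (0:ℝ) ≤ Real.sqrt s * ‖z‖ ^ (1/2:ℝ) := by positivity
      calc Real.sqrt s * ‖z‖ ^ (1/2:ℝ) * Real.cos (z.arg / 2 + Real.pi)
          ≤ Real.sqrt s * ‖z‖ ^ (1/2:ℝ) * (-δ) :=
            mul_le_mul_of_nonneg_left hcosle hnn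
        _ = -b * ‖z‖ ^ (1/2:ℝ) := by rw [hbdef]; ring
    calc ‖g z * u0 ((s:ℂ) * z)‖ = ‖g z‖ * ‖u0 ((s:ℂ) * z)‖ := norm_mul _ _
      _ ≤ (M * ‖z‖ ^ α) * Real.exp (-b * ‖z‖ ^ (1/2:ℝ)) :=
          mul_le_mul (hbound z hz) hu0 (norm_nonneg _) (by positivity)
      _ = M * F z := by rw [hFdef]; ring
  have hMF : IntegrableOn (fun z => M * F z) (sectorW θm θM) := hFint.const_mul M
  have hMFSh : IntegrableOn (fun z => M * F z) Sh := hMF.mono_set inter_subset_left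
  have step1 : ‖∫ z in Sh, g z * u0 ((s:ℂ)*z)‖ ≤ ∫ z in Sh, M * F z := by
    apply norm_integral_le_of_norm_le hMFSh
    exact (ae_restrict_iff' hSh_meas).2 (ae_of_all _ hpt)
  have step2 : ∫ z in Sh, M * F z ≤ ∫ z in sectorW θm θM, M * F z := by
    apply setIntegral_mono_set hMF
    · exact ae_of_all _ (fun z => by positivity)
    · exact HasSubset.Subset.eventuallyLE inter_subset_left
  have step3 : ∫ z in sectorW θm θM, M * F z =
      M * ((θM - θm) * (b ^ (-(2*α+4) : ℝ) * (2 * Real.Gamma (2*α+4)))) := by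
    rw [integral_const_mul, hFval]
  have e2 : (Real.sqrt s) ^ (-(2*α+4) : ℝ) = s ^ (-α-2 : ℝ) := by
    rw [Real.sqrt_eq_rpow, ← Real.rpow_mul hs.le]
    congr 1
    ring
  have e1 : b ^ (-(2*α+4) : ℝ) = (δ ^ ((2*α+4) : ℝ))⁻¹ * s ^ (-α-2 : ℝ) := by
    rw [hbdef, Real.mul_rpow hδ.le (Real.sqrt_nonneg s), Real.rpow_neg hδ.le, e2]
  calc ‖∫ z in Sh, g z * u0 ((s:ℂ)*z)‖ ≤ ∫ z in Sh, M * F z := step1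
    _ ≤ ∫ z in sectorW θm θM, M * F z := step2
    _ = 2 * (θM - θm) * Real.Gamma (2 * α + 4) / δ ^ ((2 * α + 4) : ℝ) * M * s ^ (-α - 2 : ℝ) := by
        rw [step3, e1, div_eq_mul_inv]
        ring
end
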